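/- Let k ∈ ℝ with k < 1 and let m be a positive integer. Then the function h : ℍ → ℂ, h(τ) := Γ(1−k, 4πm·Im τ)·e^{−2πimτ}, satisfies Δ_k h = 0 on all of ℍ. -/

import Mathlib

open Complex MeasureTheory
open scoped Real

noncomputable section

/-- Upper incomplete Gamma function `Γ(s,x) = ∫_x^∞ t^{s-1} e^{-t} dt`. -/
def incGamma (s x : ℝ) : ℝ := ∫ t in Set.Ioi x, t ^ (s - 1) * Real.exp (-t)

/-- Partial derivative `∂/∂u` (in the real direction). -/
def pdx (f : ℂ → ℂ) (τ : ℂ) : ℂ := deriv (fun t : ℝ => f (τ + t)) 0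

/-- Partial derivative `∂/∂v` (in the imaginary direction). -/
def pdy (f : ℂ → ℂ) (τ : ℂ) : ℂ := deriv (fun t : ℝ => f (τ + t * Complex.I)) 0

/-- Wirtinger derivative `∂/∂τ̄ = (1/2)(∂/∂u + i ∂/∂v)`. -/
def dbar (f : ℂ → ℂ) (τ : ℂ) : ℂ := (pdx f τ + Complex.I * pdy f τ) / 2

/-- Bruinier–Funke operator `ξ_κ f(τ) = 2i v^κ conj(∂f/∂τ̄)`. -/
def xiOp (κ : ℝ) (f : ℂ → ℂ) (τ : ℂ) : ℂ :=
  2 * Complex.I * ((τ.im ^ κ : ℝ) : ℂ) * (starRingEnd ℂ) (dbar f τ)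

/-- Weight `k` hyperbolic Laplacian `Δ_k = -v²(∂_u² + ∂_v²) + ikv(∂_u + i∂_v)`. -/
def hypLap (k : ℝ) (f : ℂ → ℂ) (τ : ℂ) : ℂ :=
  -(τ.im : ℂ) ^ 2 * (pdx (pdx f) τ + pdy (pdy f) τ) +
    Complex.I * (k : ℂ) * (τ.im : ℂ) * (pdx f τ + Complex.I * pdy f τ)

open Set

lemma incGamma_int {s : ℝ} (hs : 0 < s) {c : ℝ} (hc : 0 < c) :
    IntegrableOn (fun t : ℝ => t ^ (s - 1) * Real.exp (-t)) (Ioi c) := by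
  have := (Real.GammaIntegral_convergent hs).mono_set (Ioi_subset_Ioi hc.le)
  exact this.congr_fun (fun t ht => mul_comm _ _) measurableSet_Ioi

lemma incGamma_contOn {s : ℝ} :
    ContinuousOn (fun t : ℝ => t ^ (s - 1) * Real.exp (-t)) (Ioi 0) :=
  (continuousOn_id.rpow_const (fun t ht => Or.inl (ne_of_gt ht))).mul
    (Real.continuous_exp.comp continuous_neg).continuousOn

lemma incGamma_hasDerivAt {s : ℝ} (hs : 0 < s) {x : ℝ} (hx : 0 < x) :
    HasDerivAt (incGamma s) (-(x ^ (s - 1) * Real.exp (-x))) x := by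
  set c := x / 2 with hcdef
  have hc : 0 < c := by positivity
  have hcx : c < x := by rw [hcdef]; linarith
  have hint := incGamma_int hs hc
  have key : ∀ y : ℝ, c < y →
      incGamma s y = incGamma s c - ∫ t in c..y, t ^ (s - 1) * Real.exp (-t) := by
    intro y hy
    have hsplit : Ioc c y ∪ Ioi y = Ioi c := Ioc_union_Ioi_eq_Ioi hy.le
    have h1 : IntegrableOn (fun t : ℝ => t ^ (s - 1) * Real.exp (-t)) (Ioc c y) :=
      hint.mono_set (by rw [← hsplit]; exact subset_union_left)
    have h2 : IntegrableOn (fun t : ℝ => t ^ (s - 1) * Real.exp (-t)) (Ioi y) :=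
      hint.mono_set (by rw [← hsplit]; exact subset_union_right)
    have hU := setIntegral_union (Ioc_disjoint_Ioi le_rfl) measurableSet_Ioi h1 h2
    rw [hsplit] at hU
    unfold incGamma
    rw [intervalIntegral.integral_of_le hy.le, hU]; ring
  have hII : IntervalIntegrable (fun t : ℝ => t ^ (s - 1) * Real.exp (-t)) volume c x := by
    refine ((incGamma_int hs (show (0:ℝ) < c/2 by positivity)).mono_set ?_).intervalIntegrable
    rw [uIcc_of_le hcx.le]
    intro t ht; exact lt_of_lt_of_le (by linarith) ht.1
  have hftc : HasDerivAt (fun y => ∫ t in c..y, t ^ (s - 1) * Real.exp (-t))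
      (x ^ (s - 1) * Real.exp (-x)) x := by
    refine intervalIntegral.integral_hasDerivAt_right hII
      (incGamma_contOn.stronglyMeasurableAtFilter isOpen_Ioi x hx) ?_
    exact (incGamma_contOn.continuousAt (isOpen_Ioi.mem_nhds hx))
  have heq : (fun y => incGamma s c - ∫ t in c..y, t ^ (s - 1) * Real.exp (-t)) =ᶠ[nhds x] incGamma s := by
    filter_upwards [eventually_gt_nhds hcx] with y hy
    rw [key y hy]
  simpa using ((hasDerivAt_const x (incGamma s c)).sub hftc).congr_of_eventuallyEq heq.symm

lemma hG_deriv {s a : ℝ} (hs : 0 < s) (ha : 0 < a) {y : ℝ} (hy : 0 < y) :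
    HasDerivAt (fun y : ℝ => incGamma s (2 * a * y))
      (-((2*a*y) ^ (s - 1) * Real.exp (-(2*a*y))) * (2*a)) y := by
  have h2 : HasDerivAt (fun y : ℝ => 2 * a * y) (2 * a) y := by
    simpa using (hasDerivAt_id y).const_mul (2 * a)
  have h1 := incGamma_hasDerivAt hs (show 0 < 2 * a * y by positivity)
  simpa [Function.comp_def] using h1.comp y h2

lemma hP_deriv {s : ℝ} {x : ℝ} (hx : 0 < x) :
    HasDerivAt (fun x : ℝ => x ^ (s - 1) * Real.exp (-x))
      ((s - 1) * x ^ (s - 1 - 1) * Real.exp (-x) + x ^ (s - 1) * -Real.exp (-x)) x := by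
  have h1 : HasDerivAt (fun x : ℝ => x ^ (s - 1)) ((s - 1) * x ^ (s - 1 - 1)) x :=
    Real.hasDerivAt_rpow_const (Or.inl hx.ne')
  have h2 : HasDerivAt (fun x : ℝ => Real.exp (-x)) (-Real.exp (-x)) x := by
    simpa using ((hasDerivAt_id x).neg).exp
  simpa using h1.fun_mul h2

lemma hPc_deriv {s a : ℝ} (ha : 0 < a) {y : ℝ} (hy : 0 < y) :
    HasDerivAt (fun y : ℝ => (2*a*y) ^ (s - 1) * Real.exp (-(2*a*y)))
      (((s - 1) * (2*a*y) ^ (s - 1 - 1) * Real.exp (-(2*a*y)) +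
        (2*a*y) ^ (s - 1) * -Real.exp (-(2*a*y))) * (2*a)) y := by
  have h2 : HasDerivAt (fun y : ℝ => 2 * a * y) (2 * a) y := by
    simpa using (hasDerivAt_id y).const_mul (2 * a)
  have h1 := hP_deriv (s := s) (show 0 < 2 * a * y by positivity)
  simpa [Function.comp_def] using h1.comp y h2


section main
variable {s a : ℝ} (hs : 0 < s) (ha : 0 < a)

/-- the function along horizontal lines -/
lemma gx_hasDerivAt (z : ℂ) :
    HasDerivAt (fun t : ℝ =>
        ((incGamma s (2 * a * (z + (t:ℂ)).im) : ℝ) : ℂ) * Complex.exp (-((a:ℂ) * Complex.I) * (z + (t:ℂ))))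
      (((incGamma s (2 * a * z.im) : ℝ) : ℂ) *
        (Complex.exp (-((a:ℂ) * Complex.I) * z) * -((a:ℂ) * Complex.I))) 0 := by
  set c : ℂ := -((a:ℂ) * Complex.I) with hc
  have hlin : HasDerivAt (fun w : ℂ => c * (z + w)) c ((0:ℝ):ℂ) := by
    simpa using ((hasDerivAt_id ((0:ℝ):ℂ)).const_add z).const_mul c
  have hexp := hlin.cexp
  have h := (hexp.comp_ofReal).const_mul ((incGamma s (2 * a * z.im) : ℝ) : ℂ)
  have heq : (fun t : ℝ =>
      ((incGamma s (2 * a * (z + (t:ℂ)).im) : ℝ) : ℂ) * Complex.exp (c * (z + (t:ℂ))))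
      = fun t : ℝ => ((incGamma s (2 * a * z.im) : ℝ) : ℂ) * Complex.exp (c * (z + (t:ℂ))) := by
    funext t; simp
  rw [heq]
  convert h using 1
  · rfl
  simp [mul_comm]

/-- vertical line: the exponential factor -/
lemma expy_hasDerivAt (z : ℂ) :
    HasDerivAt (fun t : ℝ => Complex.exp (-((a:ℂ) * Complex.I) * (z + (t:ℂ) * Complex.I)))
      (Complex.exp (-((a:ℂ) * Complex.I) * z) * (a:ℂ)) 0 := by
  set c : ℂ := -((a:ℂ) * Complex.I) with hc
  have hlin : HasDerivAt (fun w : ℂ => c * (z + w * Complex.I)) (c * Complex.I) ((0:ℝ):ℂ) := by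
    simpa using (((hasDerivAt_id ((0:ℝ):ℂ)).mul_const Complex.I).const_add z).const_mul c
  have h := (hlin.cexp).comp_ofReal
  convert h using 1
  all_goals simp [hc, mul_assoc, Complex.I_mul_I]

/-- vertical line: the incomplete Gamma factor -/
lemma gamy_hasDerivAt (hs : 0 < s) (ha : 0 < a) {z : ℂ} (hz : 0 < z.im) :
    HasDerivAt (fun t : ℝ => ((incGamma s (2 * a * (z + (t:ℂ) * Complex.I).im) : ℝ) : ℂ))
      (((-((2*a*z.im) ^ (s - 1) * Real.exp (-(2*a*z.im))) * (2*a) : ℝ) : ℂ)) 0 := by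
  have hshift : HasDerivAt (fun t : ℝ => z.im + t) 1 0 := by
    simpa using (hasDerivAt_id (0:ℝ)).const_add z.im
  have h1 := (hG_deriv hs ha (show 0 < z.im + 0 by simpa using hz)).comp 0 hshift
  have h2 : HasDerivAt (fun t : ℝ => incGamma s (2 * a * (z.im + t)))
      (-((2*a*z.im) ^ (s - 1) * Real.exp (-(2*a*z.im))) * (2*a)) 0 := by
    simpa [Function.comp_def] using h1
  have h3 := h2.ofReal_comp
  refine h3.congr_of_eventuallyEq (Filter.Eventually.of_forall fun t => ?_)
  simp

lemma pdy_formula (hs : 0 < s) (ha : 0 < a) {z : ℂ} (hz : 0 < z.im) :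
    pdy (fun z => ((incGamma s (2 * a * z.im) : ℝ) : ℂ) *
        Complex.exp (-((a:ℂ) * Complex.I) * z)) z =
      ((-((2*a*z.im) ^ (s - 1) * Real.exp (-(2*a*z.im))) * (2*a) : ℝ) : ℂ) *
          Complex.exp (-((a:ℂ) * Complex.I) * z) +
        ((incGamma s (2 * a * z.im) : ℝ) : ℂ) *
          (Complex.exp (-((a:ℂ) * Complex.I) * z) * (a:ℂ)) := by
  have h := ((gamy_hasDerivAt hs ha hz).fun_mul (expy_hasDerivAt (a := a) z)).deriv
  rw [pdy]
  simpa using h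

lemma pdx_formula (z : ℂ) :
    pdx (fun z => ((incGamma s (2 * a * z.im) : ℝ) : ℂ) *
        Complex.exp (-((a:ℂ) * Complex.I) * z)) z =
      ((incGamma s (2 * a * z.im) : ℝ) : ℂ) *
        (Complex.exp (-((a:ℂ) * Complex.I) * z) * -((a:ℂ) * Complex.I)) := by
  have h := (gx_hasDerivAt (s := s) (a := a) z).deriv
  rw [pdx]
  simpa using h

lemma pdx2_formula (τ : ℂ) :
    pdx (pdx (fun z => ((incGamma s (2 * a * z.im) : ℝ) : ℂ) *
        Complex.exp (-((a:ℂ) * Complex.I) * z))) τ =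
      ((incGamma s (2 * a * τ.im) : ℝ) : ℂ) *
        (Complex.exp (-((a:ℂ) * Complex.I) * τ) * -((a:ℂ) * Complex.I)) *
        -((a:ℂ) * Complex.I) := by
  have hfun : pdx (fun z => ((incGamma s (2 * a * z.im) : ℝ) : ℂ) *
      Complex.exp (-((a:ℂ) * Complex.I) * z)) =
      fun z => ((incGamma s (2 * a * z.im) : ℝ) : ℂ) *
        (Complex.exp (-((a:ℂ) * Complex.I) * z) * -((a:ℂ) * Complex.I)) :=
    funext fun z => pdx_formula z
  rw [hfun, pdx]
  have h := ((gx_hasDerivAt (s := s) (a := a) τ).mul_const (-((a:ℂ) * Complex.I)))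
  have h' := h.congr_of_eventuallyEq
    (Filter.Eventually.of_forall (fun t : ℝ => (mul_assoc
      ((incGamma s (2 * a * (τ + (t:ℂ)).im) : ℝ) : ℂ)
      (Complex.exp (-((a:ℂ) * Complex.I) * (τ + (t:ℂ)))) (-((a:ℂ) * Complex.I))).symm))
  simpa using h'.deriv

lemma pdy2_formula (hs : 0 < s) (ha : 0 < a) {τ : ℂ} (hτ : 0 < τ.im) :
    pdy (pdy (fun z => ((incGamma s (2 * a * z.im) : ℝ) : ℂ) *
        Complex.exp (-((a:ℂ) * Complex.I) * z))) τ =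
      ((-(((s-1) * (2*a*τ.im) ^ (s-1-1) * Real.exp (-(2*a*τ.im)) +
            (2*a*τ.im) ^ (s-1) * -Real.exp (-(2*a*τ.im))) * (2*a)) * (2*a) : ℝ) : ℂ) *
          Complex.exp (-((a:ℂ) * Complex.I) * τ) +
        ((-((2*a*τ.im) ^ (s-1) * Real.exp (-(2*a*τ.im))) * (2*a) : ℝ) : ℂ) *
          (Complex.exp (-((a:ℂ) * Complex.I) * τ) * (a:ℂ)) +
        (((-((2*a*τ.im) ^ (s-1) * Real.exp (-(2*a*τ.im))) * (2*a) : ℝ) : ℂ) *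
          (Complex.exp (-((a:ℂ) * Complex.I) * τ) * (a:ℂ)) +
        ((incGamma s (2 * a * τ.im) : ℝ) : ℂ) *
          (Complex.exp (-((a:ℂ) * Complex.I) * τ) * (a:ℂ) * (a:ℂ))) := by
  classical
  -- the function t ↦ pdy g (τ + t I) agrees near 0 with an explicit formula
  set c : ℂ := -((a:ℂ) * Complex.I) with hc
  have hev : (fun t : ℝ => pdy (fun z => ((incGamma s (2 * a * z.im) : ℝ) : ℂ) *
      Complex.exp (c * z)) (τ + (t:ℂ) * Complex.I)) =ᶠ[nhds (0:ℝ)]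
      (fun t : ℝ =>
        ((-((2*a*(τ + (t:ℂ) * Complex.I).im) ^ (s-1) *
            Real.exp (-(2*a*(τ + (t:ℂ) * Complex.I).im))) * (2*a) : ℝ) : ℂ) *
          Complex.exp (c * (τ + (t:ℂ) * Complex.I)) +
        ((incGamma s (2 * a * (τ + (t:ℂ) * Complex.I).im) : ℝ) : ℂ) *
          (Complex.exp (c * (τ + (t:ℂ) * Complex.I)) * (a:ℂ))) := by
    have hpos : ∀ᶠ t : ℝ in nhds 0, 0 < (τ + (t:ℂ) * Complex.I).im := by
      filter_upwards [eventually_gt_nhds (show -τ.im < (0:ℝ) by linarith)] with t ht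
      simp; linarith
    filter_upwards [hpos] with t ht
    exact pdy_formula hs ha ht
  rw [pdy, hev.deriv_eq]
  -- derivative of the explicit formula
  have hA : HasDerivAt (fun t : ℝ =>
      ((-((2*a*(τ + (t:ℂ) * Complex.I).im) ^ (s-1) *
          Real.exp (-(2*a*(τ + (t:ℂ) * Complex.I).im))) * (2*a) : ℝ) : ℂ))
      ((( -(((s-1) * (2*a*τ.im) ^ (s-1-1) * Real.exp (-(2*a*τ.im)) +
          (2*a*τ.im) ^ (s-1) * -Real.exp (-(2*a*τ.im))) * (2*a)) * (2*a) : ℝ) : ℂ)) 0 := by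
    have hshift : HasDerivAt (fun t : ℝ => τ.im + t) 1 0 := by
      simpa using (hasDerivAt_id (0:ℝ)).const_add τ.im
    have h1 := ((hPc_deriv (s := s) ha (show 0 < τ.im + 0 by simpa using hτ)).neg.mul_const
      (2*a)).comp 0 hshift
    have h2 := h1
    simp only [Function.comp_def, add_zero, mul_one] at h2
    have h3 := h2.ofReal_comp
    refine h3.congr_of_eventuallyEq (Filter.Eventually.of_forall fun t => ?_)
    simp
  have hB := expy_hasDerivAt (a := a) τ
  have hC := gamy_hasDerivAt hs ha hτ
  have hD := (expy_hasDerivAt (a := a) τ).mul_const ((a:ℂ))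
  have h := (hA.mul hB).add (hC.mul hD)
  exact h.deriv.trans (by simp only [hc]; push_cast; norm_num)

end main

lemma mainlemma (k a : ℝ) (hk : k < 1) (ha : 0 < a) (τ : ℂ) (hτ : 0 < τ.im) :
    hypLap k (fun z => ((incGamma (1-k) (2 * a * z.im) : ℝ) : ℂ) *
      Complex.exp (-((a:ℂ) * Complex.I) * z)) τ = 0 := by
  have hs : 0 < 1 - k := by linarith
  rw [hypLap, pdx_formula, pdy_formula hs ha hτ, pdx2_formula, pdy2_formula hs ha hτ]
  have hx : (0:ℝ) < 2*a*τ.im := by positivity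
  have hrel : (2*a*τ.im) ^ (1-k-1-1) * (2*a*τ.im) = (2*a*τ.im) ^ (1-k-1) := by
    rw [← Real.rpow_add_one hx.ne']; norm_num
  have hrelC : (((2*a*τ.im) ^ (1-k-1-1) : ℝ) : ℂ) * (2*(a:ℂ)*(τ.im:ℂ)) =
      (((2*a*τ.im) ^ (1-k-1) : ℝ) : ℂ) := by
    rw [← hrel]; push_cast; ring
  push_cast
  linear_combination
    (Complex.exp (-((a:ℂ)*Complex.I)*τ) *
      (-(a:ℂ)^2*(τ.im:ℂ)^2*((incGamma (1-k) (2*a*τ.im) : ℝ):ℂ)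
        - 2*(a:ℂ)*(k:ℂ)*(τ.im:ℂ)*(((2*a*τ.im) ^ (1-k-1) : ℝ):ℂ) *
          Complex.exp (-(2*(a:ℂ)*(τ.im:ℂ))))) * Complex.I_sq +
    (-2*(a:ℂ)*(k:ℂ)*(τ.im:ℂ)*Complex.exp (-(2*(a:ℂ)*(τ.im:ℂ))) *
      Complex.exp (-((a:ℂ)*Complex.I)*τ)) * hrelC


/-- For `k < 1` and `m ≥ 1`, the function
`h(τ) = Γ(1-k, 4πm Im τ) e^{-2πimτ}` satisfies `Δ_k h = 0` on all of ℍ. -/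
theorem stmt9 (k : ℝ) (hk : k < 1) (m : ℕ) (hm : 0 < m) (τ : ℂ) (hτ : 0 < τ.im) :
    hypLap k
      (fun z => (incGamma (1 - k) (4 * π * (m : ℝ) * z.im) : ℂ) *
        Complex.exp (-(2 * π * Complex.I * (m : ℂ) * z))) τ = 0 := by
  have ha : (0:ℝ) < 2 * π * m := by positivity
  have hfun : (fun z : ℂ => (incGamma (1 - k) (4 * π * (m : ℝ) * z.im) : ℂ) *
        Complex.exp (-(2 * π * Complex.I * (m : ℂ) * z)))
      = fun z : ℂ => ((incGamma (1-k) (2 * (2 * π * m) * z.im) : ℝ) : ℂ) *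
        Complex.exp (-(((2 * π * m : ℝ) : ℂ) * Complex.I) * z) := by
    funext z
    rw [show 4 * π * (m:ℝ) * z.im = 2 * (2 * π * m) * z.im by ring,
      show -(2 * π * Complex.I * (m:ℂ) * z) = -(((2 * π * m : ℝ) : ℂ) * Complex.I) * z by
        push_cast; ring]
  rw [hfun]
  exact mainlemma k (2 * π * m) hk ha τ hτ
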